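/- Let (ρ,(U^x)) and (ρ̌,(Ǔ^x)) be two natural right absorbers in the same Hilbert space tensor category, with associated multiplicative unitaries U = U^ρ, Ǔ = Ǔ^{ρ̌}, and set V := U^{ρ̌}, W := Ǔ^ρ. Then the following six pentagon-like equations hold: U₂₃V₁₂ = V₁₂V₁₃U₂₃, Ǔ₂₃W₁₂ = W₁₂W₁₃Ǔ₂₃, V₂₃Ǔ₁₂ = Ǔ₁₂V₁₃V₂₃, W₂₃U₁₂ = U₁₂W₁₃W₂₃, V₂₃W₁₂ = W₁₂U₁₃V₂₃, and W₂₃V₁₂ = V₁₂Ǔ₁₃W₂₃. -/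

import Mathlib

noncomputable section
open scoped TensorProduct

namespace MU

variable {A B M R : Type*}
  [AddCommMonoid A] [Module ℂ A] [AddCommMonoid B] [Module ℂ B]
  [AddCommMonoid M] [Module ℂ M] [AddCommMonoid R] [Module ℂ R]

/-- Extend an endomorphism of `A ⊗ B` to `A ⊗ (B ⊗ R)`, acting trivially on the tail `R`.
This realises the leg numbering `T₁₂`. -/
def endTail (T : (A ⊗[ℂ] B) ≃ₗ[ℂ] (A ⊗[ℂ] B)) :
    (A ⊗[ℂ] (B ⊗[ℂ] R)) ≃ₗ[ℂ] (A ⊗[ℂ] (B ⊗[ℂ] R)) :=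
  (TensorProduct.assoc ℂ A B R).symm ≪≫ₗ
    TensorProduct.congr T (LinearEquiv.refl ℂ R) ≪≫ₗ TensorProduct.assoc ℂ A B R

/-- Exchange the first tensor factor with the second one. -/
def exch : (A ⊗[ℂ] (B ⊗[ℂ] M)) ≃ₗ[ℂ] (B ⊗[ℂ] (A ⊗[ℂ] M)) :=
  (TensorProduct.assoc ℂ A B M).symm ≪≫ₗ
    TensorProduct.congr (TensorProduct.comm ℂ A B) (LinearEquiv.refl ℂ M) ≪≫ₗ
    TensorProduct.assoc ℂ B A M

/-- Let an endomorphism of `A ⊗ M` act on `A ⊗ (B ⊗ M)`, skipping the middle leg `B`. -/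
def stepMid (T : (A ⊗[ℂ] M) ≃ₗ[ℂ] (A ⊗[ℂ] M)) :
    (A ⊗[ℂ] (B ⊗[ℂ] M)) ≃ₗ[ℂ] (A ⊗[ℂ] (B ⊗[ℂ] M)) :=
  exch ≪≫ₗ TensorProduct.congr (LinearEquiv.refl ℂ B) T ≪≫ₗ exch

/-- Let an endomorphism of `M` act on `A ⊗ M`, acting trivially on the new leftmost leg. -/
def extL (T : M ≃ₗ[ℂ] M) : (A ⊗[ℂ] M) ≃ₗ[ℂ] (A ⊗[ℂ] M) :=
  TensorProduct.congr (LinearEquiv.refl ℂ A) T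

end MU

universe u

/-- A (strict) Hilbert space tensor category, encoded concretely: objects are
ℂ-modules equipped with an extra structure `S`, arrows are the linear maps
satisfying the predicate `IsHom`, the monoidal structure is induced by the tensor
product of the underlying spaces (so the forgetful functor is strict monoidal), and
`triv` is the strict monoidal section `τ` equipping a space with the trivial
structure (every linear map is an arrow between trivial objects). -/
structure HSTC : Type (u + 1) where
  /-- the extra structure making a ℂ-module into an object of the category -/
  S : ∀ (X : Type u) [AddCommGroup X] [Module ℂ X], Type u
  /-- the arrows of the category, as a predicate on linear maps -/
  IsHom : ∀ {X Y : Type u} [AddCommGroup X] [Module ℂ X] [AddCommGroup Y] [Module ℂ Y],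
    S X → S Y → (X →ₗ[ℂ] Y) → Prop
  isHom_id : ∀ {X : Type u} [AddCommGroup X] [Module ℂ X] (s : S X),
    IsHom s s LinearMap.id
  isHom_comp : ∀ {X Y Z : Type u} [AddCommGroup X] [Module ℂ X] [AddCommGroup Y]
    [Module ℂ Y] [AddCommGroup Z] [Module ℂ Z] (s : S X) (t : S Y) (u : S Z)
    (f : X →ₗ[ℂ] Y) (g : Y →ₗ[ℂ] Z), IsHom s t f → IsHom t u g → IsHom s u (g ∘ₗ f)
  /-- the tensor product of objects -/
  tenS : ∀ {X Y : Type u} [AddCommGroup X] [Module ℂ X] [AddCommGroup Y] [Module ℂ Y],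
    S X → S Y → S (X ⊗[ℂ] Y)
  /-- the trivial structure: the strict monoidal functor `τ : Hilb → C` -/
  triv : ∀ (X : Type u) [AddCommGroup X] [Module ℂ X], S X
  /-- every bounded linear map is an arrow between trivial objects -/
  triv_isHom : ∀ {X Y : Type u} [AddCommGroup X] [Module ℂ X] [AddCommGroup Y]
    [Module ℂ Y] (f : X →ₗ[ℂ] Y), IsHom (triv X) (triv Y) f
  /-- the tensor product of arrows is an arrow -/
  ten_isHom : ∀ {X X' Y Y' : Type u} [AddCommGroup X] [Module ℂ X] [AddCommGroup X']
    [Module ℂ X'] [AddCommGroup Y] [Module ℂ Y] [AddCommGroup Y'] [Module ℂ Y']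
    (s : S X) (s' : S X') (t : S Y) (t' : S Y') (f : X →ₗ[ℂ] X') (g : Y →ₗ[ℂ] Y'),
    IsHom s s' f → IsHom t t' g → IsHom (tenS s t) (tenS s' t') (TensorProduct.map f g)
  /-- `τ` is a strict tensor functor -/
  triv_tenS : ∀ (X Y : Type u) [AddCommGroup X] [Module ℂ X] [AddCommGroup Y]
    [Module ℂ Y], tenS (triv X) (triv Y) = triv (X ⊗[ℂ] Y)
  /-- the associators of the category are mapped to the canonical ones -/
  assoc_isHom : ∀ {X Y Z : Type u} [AddCommGroup X] [Module ℂ X] [AddCommGroup Y]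
    [Module ℂ Y] [AddCommGroup Z] [Module ℂ Z] (s : S X) (t : S Y) (u : S Z),
    IsHom (tenS (tenS s t) u) (tenS s (tenS t u))
      (TensorProduct.assoc ℂ X Y Z).toLinearMap
  assoc_symm_isHom : ∀ {X Y Z : Type u} [AddCommGroup X] [Module ℂ X] [AddCommGroup Y]
    [Module ℂ Y] [AddCommGroup Z] [Module ℂ Z] (s : S X) (t : S Y) (u : S Z),
    IsHom (tenS s (tenS t u)) (tenS (tenS s t) u)
      ((TensorProduct.assoc ℂ X Y Z).symm : X ⊗[ℂ] (Y ⊗[ℂ] Z) →ₗ[ℂ] (X ⊗[ℂ] Y) ⊗[ℂ] Z)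
  /-- the flip over a trivial object comes from an arrow (Lemma 2.5 of the paper) -/
  flip_triv_isHom : ∀ {X Y : Type u} [AddCommGroup X] [Module ℂ X] [AddCommGroup Y]
    [Module ℂ Y] (s : S X),
    IsHom (tenS s (triv Y)) (tenS (triv Y) s) (TensorProduct.comm ℂ X Y).toLinearMap

/-- A natural right absorber `(ρ, (Uˣ)ₓ)` in a Hilbert space tensor category `C`:
unitaries `Uˣ : x ⊗ ρ → τ(x) ⊗ ρ` (described on the underlying spaces, where both
objects have underlying space `X ⊗ R`), natural in `x`, and multiplicative:
`U^{x₁ ⊗ x₂} = U^{x₁}₁₃ U^{x₂}₂₃`. -/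
structure NRA (C : HSTC.{u}) (R : Type u) [AddCommGroup R] [Module ℂ R] where
  /-- the structure of the absorbing object `ρ` on the space `R` -/
  sρ : C.S R
  /-- the absorbing unitaries `Uˣ`, at the level of the underlying spaces -/
  U : ∀ (X : Type u) [AddCommGroup X] [Module ℂ X], C.S X →
    ((X ⊗[ℂ] R) ≃ₗ[ℂ] (X ⊗[ℂ] R))
  /-- each `Uˣ` is an arrow `x ⊗ ρ → τ(x) ⊗ ρ` in `C` -/
  U_isHom : ∀ (X : Type u) [AddCommGroup X] [Module ℂ X] (s : C.S X),
    C.IsHom (C.tenS s sρ) (C.tenS (C.triv X) sρ) (U X s).toLinearMap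
  /-- naturality of the `Uˣ` -/
  U_natural : ∀ {X Y : Type u} [AddCommGroup X] [Module ℂ X] [AddCommGroup Y]
    [Module ℂ Y] (s : C.S X) (t : C.S Y) (a : X →ₗ[ℂ] Y), C.IsHom s t a →
    TensorProduct.map a LinearMap.id ∘ₗ (U X s).toLinearMap
      = (U Y t).toLinearMap ∘ₗ TensorProduct.map a LinearMap.id
  /-- multiplicativity: `U^{x₁ ⊗ x₂} = U^{x₁}₁₃ U^{x₂}₂₃` -/
  U_mult : ∀ (X Y : Type u) [AddCommGroup X] [Module ℂ X] [AddCommGroup Y]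
    [Module ℂ Y] (s : C.S X) (t : C.S Y),
    U (X ⊗[ℂ] Y) (C.tenS s t)
      = TensorProduct.assoc ℂ X Y R ≪≫ₗ MU.extL (U Y t) ≪≫ₗ MU.stepMid (U X s) ≪≫ₗ
          (TensorProduct.assoc ℂ X Y R).symm

/-!
Everything follows from one pentagon identity: if `a : x ⊗ y → τ(x) ⊗ y` is an arrow, then
naturality of `U` along `a`, read through the multiplicativity of `U^{x ⊗ y}` and of
`U^{τ(x) ⊗ y}`, gives `U^y₂₃ a₁₂ = a₁₂ U^x₁₃ U^y₂₃`. For this one needs `U^{τ(X)} = 1`: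
naturality along the arrows `τ(ℂ) → τ(X)` shows `U^{τ(X)} = 1 ⊗ T` for one invertible `T`,
and multiplicativity on `τ(ℂ) ⊗ τ(ℂ) = τ(ℂ ⊗ ℂ)` forces `T² = T`, hence `T = 1`.
The six equations are the pentagon for the absorber `U` or `Ǔ` and `a ∈ {U, Ǔ, V, W}`.
-/

open MU TensorProduct

namespace MU

variable {A B M : Type*} [AddCommMonoid A] [Module ℂ A] [AddCommMonoid B] [Module ℂ B]
  [AddCommMonoid M] [Module ℂ M]

@[simp]
theorem exch_tmul (x : A) (y : B) (m : M) :
    exch (x ⊗ₜ[ℂ] (y ⊗ₜ[ℂ] m)) = y ⊗ₜ[ℂ] (x ⊗ₜ[ℂ] m) := by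
  simp [exch]

@[simp]
theorem extL_tmul (T : M ≃ₗ[ℂ] M) (x : A) (m : M) : extL T (x ⊗ₜ[ℂ] m) = x ⊗ₜ[ℂ] T m :=
  rfl

@[simp]
theorem stepMid_tmul (T : (A ⊗[ℂ] M) ≃ₗ[ℂ] (A ⊗[ℂ] M)) (x : A) (y : B) (m : M) :
    stepMid T (x ⊗ₜ[ℂ] (y ⊗ₜ[ℂ] m)) = exch (y ⊗ₜ[ℂ] T (x ⊗ₜ[ℂ] m)) := by
  simp [stepMid]

@[simp]
theorem stepMid_refl :
    stepMid (B := B) (LinearEquiv.refl ℂ (A ⊗[ℂ] M)) = LinearEquiv.refl ℂ _ :=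
  LinearEquiv.toLinearMap_injective <| ext_threefold' fun _ _ _ => by simp

end MU

theorem TensorProduct.tmul_right_injective_of_apply_eq_one {𝕜 X N : Type*} [CommSemiring 𝕜]
    [AddCommMonoid X] [Module 𝕜 X] [AddCommMonoid N] [Module 𝕜 N] {x : X} (f : X →ₗ[𝕜] 𝕜)
    (hx : f x = 1) : Function.Injective (x ⊗ₜ[𝕜] · : N → X ⊗[𝕜] N) :=
  Function.LeftInverse.injective (g := fun z => TensorProduct.lid 𝕜 N (f.rTensor N z))
    fun n => by simp [hx]

def unitTensorEquiv (R : Type*) [AddCommGroup R] [Module ℂ R] :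
    (ULift.{u} ℂ ⊗[ℂ] R) ≃ₗ[ℂ] R :=
  ULift.moduleEquiv.rTensor R ≪≫ₗ TensorProduct.lid ℂ R

theorem unitTensorEquiv_symm_apply {R : Type*} [AddCommGroup R] [Module ℂ R] (r : R) :
    (unitTensorEquiv.{u} R).symm r = ⟨1⟩ ⊗ₜ[ℂ] r :=
  (LinearEquiv.symm_apply_eq _).2 (by simp [unitTensorEquiv])

namespace NRA

variable {C : HSTC.{u}} {R : Type u} [AddCommGroup R] [Module ℂ R] (A : NRA C R)

def trivAction : R ≃ₗ[ℂ] R :=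
  (unitTensorEquiv R).symm ≪≫ₗ A.U _ (C.triv _) ≪≫ₗ unitTensorEquiv R

theorem U_triv_unit_tmul (r : R) :
    A.U (ULift.{u} ℂ) (C.triv _) (⟨1⟩ ⊗ₜ[ℂ] r) = ⟨1⟩ ⊗ₜ[ℂ] A.trivAction r := by
  simp [trivAction, ← unitTensorEquiv_symm_apply]

theorem U_triv_eq_extL (X : Type u) [AddCommGroup X] [Module ℂ X] :
    A.U X (C.triv X) = extL A.trivAction := by
  refine LinearEquiv.toLinearMap_injective (TensorProduct.ext' fun ξ r => ?_)
  let a : ULift.{u} ℂ →ₗ[ℂ] X :=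
    LinearMap.toSpanSingleton ℂ X ξ ∘ₗ ULift.moduleEquiv.toLinearMap
  have hnat := LinearMap.congr_fun (A.U_natural _ _ a (C.triv_isHom a)) (⟨1⟩ ⊗ₜ[ℂ] r)
  simpa [a, U_triv_unit_tmul] using hnat.symm

theorem trivAction_mul_self : A.trivAction * A.trivAction = A.trivAction := by
  have hmult := A.U_mult _ _ (C.triv (ULift.{u} ℂ)) (C.triv (ULift.{u} ℂ))
  rw [C.triv_tenS, U_triv_eq_extL, U_triv_eq_extL] at hmult
  ext r
  have hpoint := DFunLike.congr_fun hmult ((⟨1⟩ ⊗ₜ[ℂ] ⟨1⟩) ⊗ₜ[ℂ] r)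
  simp only [LinearEquiv.trans_apply, extL_tmul, assoc_tmul, stepMid_tmul, exch_tmul,
    assoc_symm_tmul] at hpoint
  have hunit : (ULift.moduleEquiv.toLinearMap ∘ₗ (unitTensorEquiv (ULift.{u} ℂ)).toLinearMap)
      ((⟨1⟩ : ULift.{u} ℂ) ⊗ₜ[ℂ] (⟨1⟩ : ULift.{u} ℂ)) = 1 := by
    simp [unitTensorEquiv]
  exact (tmul_right_injective_of_apply_eq_one _ hunit hpoint).symm

theorem trivAction_eq_one : A.trivAction = 1 :=
  mul_eq_left.mp A.trivAction_mul_self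

theorem U_triv (X : Type u) [AddCommGroup X] [Module ℂ X] :
    A.U X (C.triv X) = LinearEquiv.refl ℂ (X ⊗[ℂ] R) := by
  rw [U_triv_eq_extL, trivAction_eq_one]
  exact congr_refl_refl

theorem extL_U_mul_endTail_of_isHom {X Y : Type u} [AddCommGroup X] [Module ℂ X]
    [AddCommGroup Y] [Module ℂ Y] (s : C.S X) (t : C.S Y) (a : (X ⊗[ℂ] Y) ≃ₗ[ℂ] (X ⊗[ℂ] Y))
    (ha : C.IsHom (C.tenS s t) (C.tenS (C.triv X) t) a.toLinearMap) :
    extL (A.U Y t) * endTail a = endTail a * stepMid (A.U X s) * extL (A.U Y t) := by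
  let α := TensorProduct.assoc ℂ X Y R
  have hmult : ∀ z, α (A.U _ (C.tenS s t) z) = stepMid (A.U X s) (extL (A.U Y t) (α z)) := by
    simp [A.U_mult, α]
  have hmult_triv : ∀ z, α (A.U _ (C.tenS (C.triv X) t) z) = extL (A.U Y t) (α z) := by
    simp [A.U_mult, A.U_triv, α]
  have hnat : ∀ z,
      a.rTensor R (A.U _ (C.tenS s t) z) = A.U _ (C.tenS (C.triv X) t) (a.rTensor R z) :=
    LinearMap.congr_fun (A.U_natural _ _ _ ha)
  have hendTail : ∀ z, endTail a (α z) = α (a.rTensor R z) := by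
    simp [endTail, α, LinearEquiv.rTensor]
  ext u
  obtain ⟨z, rfl⟩ := α.surjective u
  calc extL (A.U Y t) (endTail a (α z))
      = α (A.U _ (C.tenS (C.triv X) t) (a.rTensor R z)) := by rw [hendTail, hmult_triv]
    _ = α (a.rTensor R (A.U _ (C.tenS s t) z)) := by rw [hnat]
    _ = endTail a (stepMid (A.U X s) (extL (A.U Y t) (α z))) := by rw [← hendTail, hmult]

end NRA

open MU in
/-- for two natural right absorbers `(ρ, U)` and `(ρ̌, Ǔ)` in the same
Hilbert space tensor category, with `U = Uᵖ` and `Ǔ = Ǔ^{ρ̌}` the associated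
multiplicative unitaries and `V = U^{ρ̌}`, `W = Ǔᵖ`, the six pentagon-like
equations hold. -/
theorem two_absorbers_pentagonal_equations
    (C : HSTC.{u}) {R R' : Type u}
    [AddCommGroup R] [Module ℂ R] [AddCommGroup R'] [Module ℂ R']
    (A : NRA C R) (B : NRA C R') :
    letI U : (R ⊗[ℂ] R) ≃ₗ[ℂ] (R ⊗[ℂ] R) := A.U R A.sρ
    letI Uc : (R' ⊗[ℂ] R') ≃ₗ[ℂ] (R' ⊗[ℂ] R') := B.U R' B.sρ
    letI V : (R' ⊗[ℂ] R) ≃ₗ[ℂ] (R' ⊗[ℂ] R) := A.U R' B.sρ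
    letI W : (R ⊗[ℂ] R') ≃ₗ[ℂ] (R ⊗[ℂ] R') := B.U R A.sρ
    -- U₂₃ V₁₂ = V₁₂ V₁₃ U₂₃ on Ȟ ⊗ H ⊗ H
    (extL U * endTail V = endTail V * stepMid V * extL U)
    -- Ǔ₂₃ W₁₂ = W₁₂ W₁₃ Ǔ₂₃ on H ⊗ Ȟ ⊗ Ȟ
    ∧ (extL Uc * endTail W = endTail W * stepMid W * extL Uc)
    -- V₂₃ Ǔ₁₂ = Ǔ₁₂ V₁₃ V₂₃ on Ȟ ⊗ Ȟ ⊗ H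
    ∧ (extL V * endTail Uc = endTail Uc * stepMid V * extL V)
    -- W₂₃ U₁₂ = U₁₂ W₁₃ W₂₃ on H ⊗ H ⊗ Ȟ
    ∧ (extL W * endTail U = endTail U * stepMid W * extL W)
    -- V₂₃ W₁₂ = W₁₂ U₁₃ V₂₃ on H ⊗ Ȟ ⊗ H
    ∧ (extL V * endTail W = endTail W * stepMid U * extL V)
    -- W₂₃ V₁₂ = V₁₂ Ǔ₁₃ W₂₃ on Ȟ ⊗ H ⊗ Ȟ
    ∧ (extL W * endTail V = endTail V * stepMid Uc * extL W) :=
  ⟨A.extL_U_mul_endTail_of_isHom B.sρ A.sρ _ (A.U_isHom R' B.sρ),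
    B.extL_U_mul_endTail_of_isHom A.sρ B.sρ _ (B.U_isHom R A.sρ),
    A.extL_U_mul_endTail_of_isHom B.sρ B.sρ _ (B.U_isHom R' B.sρ),
    B.extL_U_mul_endTail_of_isHom A.sρ A.sρ _ (A.U_isHom R A.sρ),
    A.extL_U_mul_endTail_of_isHom A.sρ B.sρ _ (B.U_isHom R A.sρ),
    B.extL_U_mul_endTail_of_isHom B.sρ A.sρ _ (A.U_isHom R' B.sρ)⟩
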